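/- arXiv:2012.13766 — 5 statements merged into one kernel-verified Lean document; each statement's English description precedes it below -/
import Mathlib

section
/- Let γ and p be vectors of Rademacher-perturbation amplitudes and base probabilities with 0 ≤ γ_i ≤ p_i ≤ 1/2 for i = 1,...,N, let n ∈ ℕ, and consider the mixture distribution over observations obtained by drawing δ ∈ {±1}^N uniformly and then drawing n independent samples from ⊗_i Bernoulli(p_i + δ_i γ_i). Then the chi-square divergence of this mixture from (⊗_i Bernoulli(p_i))^{⊗n} satisfies 1 + χ² = Π_{i=1}^N [½(1 + γ_i²/(p_i(1-p_i)))^n + ½(1 - γ_i²/(p_i(1-p_i)))^n] ≤ exp(Σ_{i=1}^N n²γ_i⁴/(2 p_i²(1-p_i)²)). -/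
open Real Finset

/-!
Expanding the square writes `1 + χ²` as an average over two independent sign vectors `δ, δ'`
of `∑_X Q_δ(X) Q_δ'(X) / P(X)`. This sum factorizes over the `n` samples and the `N`
coordinates, and a single Bernoulli coordinate contributes
`∑_b q_δ(b) q_δ'(b) / p(b) = 1 + δ_j δ'_j γ_j² / (p_j (1 - p_j))`; averaging over the signs
coordinatewise gives the product. The bound follows from `(1 ± t)ⁿ ≤ e^{± n t}` and
`cosh x ≤ e^{x² / 2}`.
-/

def bernoulliMass (θ : ℝ) (b : Bool) : ℝ := if b then θ else 1 - θ

theorem sum_sq_sum_div_eq_sum_sum_sum {Δ Ω : Type*} [Fintype Δ] [Fintype Ω] (f : Δ → Ω → ℝ)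
    (r : Ω → ℝ) :
    ∑ ω, (∑ δ, f δ ω) ^ 2 / r ω = ∑ δ, ∑ δ', ∑ ω, f δ ω * f δ' ω / r ω := by
  simp_rw [sq, sum_mul_sum, sum_div]
  rw [sum_comm]
  exact sum_congr rfl fun δ _ => sum_comm

section ProductMixture

variable {ι κ α β : Type*} [Fintype ι] [DecidableEq ι] [Fintype κ] [DecidableEq κ] [Fintype α]
  [Fintype β]

theorem sum_prod_prod_eq_prod_sum_pow (g : κ → β → ℝ) :
    ∑ X : ι → κ → β, ∏ i, ∏ j, g j (X i j) = (∏ j, ∑ b, g j b) ^ Fintype.card ι := by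
  rw [← card_univ, ← prod_const, Fintype.prod_sum]
  simp_rw [Fintype.prod_sum]

theorem sum_sum_prod_eq_prod_sum_sum (h : κ → α → α → ℝ) :
    ∑ δ : κ → α, ∑ δ' : κ → α, ∏ j, h j (δ j) (δ' j) = ∏ j, ∑ a, ∑ a', h j a a' := by
  simp_rw [Fintype.prod_sum]

theorem sum_sq_sum_prod_div_prod (q : κ → α → β → ℝ) (r : κ → β → ℝ) :
    ∑ X : ι → κ → β, (∑ δ : κ → α, ∏ i, ∏ j, q j (δ j) (X i j)) ^ 2 / ∏ i, ∏ j, r j (X i j)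
      = ∏ j, ∑ a, ∑ a', (∑ b, q j a b * q j a' b / r j b) ^ Fintype.card ι := by
  rw [sum_sq_sum_div_eq_sum_sum_sum, ← sum_sum_prod_eq_prod_sum_sum]
  refine sum_congr rfl fun δ _ => sum_congr rfl fun δ' _ => ?_
  simp_rw [← prod_mul_distrib, ← prod_div_distrib, prod_pow]
  exact sum_prod_prod_eq_prod_sum_pow fun j b => q j (δ j) b * q j (δ' j) b / r j b

end ProductMixture

theorem sum_bernoulliMass_mul_div (p γ e e' : ℝ) (h0 : p = 0 → γ = 0) (h1 : p = 1 → γ = 0) :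
    ∑ b, bernoulliMass (p + e * γ) b * bernoulliMass (p + e' * γ) b / bernoulliMass p b
      = 1 + e * e' * (γ ^ 2 / (p * (1 - p))) := by
  simp only [Fintype.sum_bool, bernoulliMass, if_true, Bool.false_eq_true, if_false]
  rcases eq_or_ne p 0 with hp | hp
  · simp [hp, h0 hp]
  rcases eq_or_ne p 1 with hq | hq
  · simp [hq, h1 hq]
  have hq' : 1 - p ≠ 0 := sub_ne_zero.mpr (Ne.symm hq)
  field_simp
  ring

theorem sum_sum_one_add_sign_mul_sign_mul_pow (t : ℝ) (n : ℕ) :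
    ∑ a : Bool, ∑ a' : Bool,
        (1 + (if a then (1 : ℝ) else -1) * (if a' then 1 else -1) * t) ^ n
      = 4 * (1 / 2 * (1 + t) ^ n + 1 / 2 * (1 - t) ^ n) := by
  simp only [Fintype.sum_bool, if_true, Bool.false_eq_true, if_false]
  ring

theorem abs_sq_div_mul_one_sub_le_one {γ p : ℝ} (hγ : |γ| ≤ p) (hp : p ≤ 1 / 2) :
    |γ ^ 2 / (p * (1 - p))| ≤ 1 := by
  have hp₀ : 0 ≤ p := (abs_nonneg γ).trans hγ
  have hden : 0 ≤ p * (1 - p) := mul_nonneg hp₀ (by linarith)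
  rw [abs_of_nonneg (div_nonneg (sq_nonneg γ) hden)]
  refine div_le_one_of_le₀ ?_ hden
  calc γ ^ 2 = |γ| ^ 2 := (sq_abs γ).symm
    _ ≤ p ^ 2 := pow_le_pow_left₀ (abs_nonneg γ) hγ 2
    _ ≤ p * (1 - p) := by nlinarith

theorem half_one_add_pow_add_half_one_sub_pow_le_exp {t : ℝ} (ht : |t| ≤ 1) (n : ℕ) :
    1 / 2 * (1 + t) ^ n + 1 / 2 * (1 - t) ^ n ≤ exp ((n : ℝ) ^ 2 * t ^ 2 / 2) := by
  obtain ⟨ht₁, ht₂⟩ := abs_le.mp ht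
  have hplus : (1 + t) ^ n ≤ exp (n * t) := by
    rw [exp_nat_mul]
    exact pow_le_pow_left₀ (by linarith) (by linarith [add_one_le_exp t]) n
  have hminus : (1 - t) ^ n ≤ exp (-(n * t)) := by
    rw [← mul_neg, exp_nat_mul]
    exact pow_le_pow_left₀ (by linarith) (by linarith [add_one_le_exp (-t)]) n
  calc 1 / 2 * (1 + t) ^ n + 1 / 2 * (1 - t) ^ n
      ≤ 1 / 2 * exp (n * t) + 1 / 2 * exp (-(n * t)) := by linarith
    _ = cosh (n * t) := by rw [cosh_eq]; ring
    _ ≤ exp ((n * t) ^ 2 / 2) := cosh_le_exp_half_sq _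
    _ = exp ((n : ℝ) ^ 2 * t ^ 2 / 2) := by ring_nf

theorem prod_half_one_add_pow_add_half_one_sub_pow_le_exp_sum {κ : Type*} [Fintype κ]
    {t : κ → ℝ} (ht : ∀ j, |t j| ≤ 1) (n : ℕ) :
    ∏ j, (1 / 2 * (1 + t j) ^ n + 1 / 2 * (1 - t j) ^ n)
      ≤ exp (∑ j, (n : ℝ) ^ 2 * t j ^ 2 / 2) := by
  rw [exp_sum]
  refine prod_le_prod (fun j _ => ?_) fun j _ => half_one_add_pow_add_half_one_sub_pow_le_exp (ht j) n
  obtain ⟨h₁, h₂⟩ := abs_le.mp (ht j)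
  have : 0 ≤ 1 + t j := by linarith
  have : 0 ≤ 1 - t j := by linarith
  positivity

/-- The chi-square computation for the Rademacher-perturbation mixture: with
`P X = ∏ (Bernoulli p)` the null likelihood of the `n` samples `X` and
`Q_δ X` the likelihood under parameters `p + δ * γ`, the quantity
`1 + χ²(mixture ‖ null) = ∑_X (𝔼_δ Q_δ X)² / P X` equals the explicit product
and is bounded by the exponential of the fourth-moment sum. -/
theorem chi_square_mixture_bound (N n : ℕ) (γ p : Fin N → ℝ)
    (hγ0 : ∀ i, 0 ≤ γ i) (hγp : ∀ i, γ i ≤ p i) (hp : ∀ i, p i ≤ 1 / 2) :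
    (∑ X : Fin n → Fin N → Bool,
        ((1 / 2 ^ N : ℝ) * ∑ δ : Fin N → Bool, ∏ i, ∏ j,
            (if X i j then p j + (if δ j then 1 else -1) * γ j
              else 1 - (p j + (if δ j then 1 else -1) * γ j))) ^ 2
          / ∏ i, ∏ j, (if X i j then p j else 1 - p j))
      = ∏ i, ((1 / 2) * (1 + γ i ^ 2 / (p i * (1 - p i))) ^ n
          + (1 / 2) * (1 - γ i ^ 2 / (p i * (1 - p i))) ^ n) ∧
    ∏ i, ((1 / 2) * (1 + γ i ^ 2 / (p i * (1 - p i))) ^ n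
        + (1 / 2) * (1 - γ i ^ 2 / (p i * (1 - p i))) ^ n) ≤
      Real.exp (∑ i, (n : ℝ) ^ 2 * γ i ^ 4 / (2 * p i ^ 2 * (1 - p i) ^ 2)) := by
  have hγ : ∀ j, |γ j| ≤ p j := fun j => abs_le.mpr ⟨by linarith [hγ0 j, hγp j], hγp j⟩
  have hp_zero : ∀ j, p j = 0 → γ j = 0 := fun j h0 => abs_nonpos_iff.mp (h0 ▸ hγ j)
  have hp_one : ∀ j, p j = 1 → γ j = 0 := fun j h1 => absurd (hp j) (by norm_num [h1])
  have hscale : (1 / 2 ^ N : ℝ) ^ 2 * 4 ^ N = 1 := by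
    rw [div_pow, one_pow, ← pow_mul, mul_comm N, pow_mul]
    norm_num
  refine ⟨?_, ?_⟩
  · calc _ = (1 / 2 ^ N) ^ 2 * ∑ X : Fin n → Fin N → Bool,
            (∑ δ : Fin N → Bool, ∏ i, ∏ j,
              bernoulliMass (p j + (if δ j then 1 else -1) * γ j) (X i j)) ^ 2
            / ∏ i, ∏ j, bernoulliMass (p j) (X i j) := by
          simp only [mul_pow, mul_div_assoc, ← mul_sum]
          rfl
      _ = _ := by
          rw [sum_sq_sum_prod_div_prod (fun j (a : Bool) =>
              bernoulliMass (p j + (if a then (1 : ℝ) else -1) * γ j))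
            (fun j => bernoulliMass (p j)), Fintype.card_fin]
          simp only [sum_bernoulliMass_mul_div _ _ _ _ (hp_zero _) (hp_one _),
            sum_sum_one_add_sign_mul_sign_mul_pow, prod_mul_distrib, prod_const, card_univ,
            Fintype.card_fin, ← mul_assoc, hscale, one_mul]
  · calc _ ≤ exp (∑ j, (n : ℝ) ^ 2 * (γ j ^ 2 / (p j * (1 - p j))) ^ 2 / 2) :=
          prod_half_one_add_pow_add_half_one_sub_pow_le_exp_sum
            (fun j => abs_sq_div_mul_one_sub_le_one (hγ j) (hp j)) n
      _ = _ := by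
        simp only [div_pow, mul_pow, mul_div_assoc', div_div]
        congr 1
        exact sum_congr rfl fun j _ => by congr 1 <;> ring
end

section
/- Let p ∈ [0,1]^N with p_1 ≥ p_2 ≥ ... ≥ p_N ≥ 0, n ≥ 2, and constants 0 < c_I ≤ c_u < 1. Let I = min{J : Σ_{i>J} p_i² ≤ c_I/n²} and let U > I be the smallest index such that n²·p_U·Σ_{i≥U} p_i ≤ c_u. Then either Σ_{i≥U} p_i ≥ (1/3)·Σ_{i>I} p_i, or Σ_{i>I} p_i ≤ Σ_{i≥U} p_i + √(c_I)/n. In particular, Σ_{i≥U} p_i + 1/n and Σ_{i>I} p_i + 1/n agree up to absolute multiplicative constants. -/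
/-!
Split the tail after `I` into the middle block `I < i < U` (sum `M`) and the tail from `U`
(sum `B`), and put `ε = √c_I / n`. If `M > 2B` and `M > ε`, let `x = p (U - 1)`, the smallest
middle entry. The tail condition for `I` bounds `M x ≤ ε²`, so `x B < M x / 2 ≤ ε² / 2`, while the
minimality of `U` gives `ε² < x (x + B)`; hence `x² > ε² / 2`. Every middle entry is at least `x`,
so the block has a single entry, `M = x`, and then `M² = M x ≤ ε²` contradicts `M > ε`.
-/

open Real Finset

theorem sum_le_or_sum_le_two_mul {ι : Type*} {s : Finset ι} {p : ι → ℝ} {j : ι} {B ε : ℝ}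
    (hj : j ∈ s) (hmin : ∀ i ∈ s, p j ≤ p i) (hpj : 0 ≤ p j) (hε : 0 ≤ ε)
    (hsq : ∑ i ∈ s, p i ^ 2 ≤ ε ^ 2) (hcut : ε ^ 2 < p j * (p j + B)) :
    ∑ i ∈ s, p i ≤ ε ∨ ∑ i ∈ s, p i ≤ 2 * B := by
  by_contra! ⟨hMε, hMB⟩
  set M := ∑ i ∈ s, p i
  have hMx : M * p j ≤ ε ^ 2 := by
    refine le_trans ?_ hsq
    rw [sum_mul]
    exact sum_le_sum fun i hi => by
      rw [sq]; exact mul_le_mul_of_nonneg_left (hmin i hi) (hpj.trans (hmin i hi))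
  have hcard : #s * p j ^ 2 ≤ ε ^ 2 := by
    refine le_trans ?_ hsq
    rw [← nsmul_eq_mul]
    exact card_nsmul_le_sum _ _ _ fun i hi => pow_le_pow_left₀ hpj (hmin i hi) 2
  have hx2 : ε ^ 2 < 2 * p j ^ 2 := by nlinarith [mul_le_mul_of_nonneg_left hMB.le hpj]
  have hs : s = {j} := by
    have hcard2 : (#s : ℝ) < 2 := by nlinarith
    have hcard1 : #s < 2 := by exact_mod_cast hcard2
    exact eq_singleton_iff_unique_mem.mpr ⟨hj, fun i hi => card_le_one.mp (by omega) i hi j hj⟩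
  have hMj : M = p j := by simp [M, hs]
  rw [hMj] at hMx hMε
  nlinarith

theorem I_and_U_general (N n I U : ℕ) (p : ℕ → ℝ) (c_I c_u : ℝ)
    (hmono : ∀ i j, 1 ≤ i → i ≤ j → j ≤ N → p j ≤ p i)
    (hnn : ∀ i, 0 ≤ p i)
    (hcI : 0 < c_I) (hcIu : c_I ≤ c_u) (hcu : c_u < 1)
    (hI1 : ∑ i ∈ Icc (I + 1) N, (p i) ^ 2 ≤ c_I / (n : ℝ) ^ 2)
    (hUI : I < U) (hUN : U ≤ N)
    (hU2 : ∀ V, I < V → V < U → ¬ ((n : ℝ) ^ 2 * p V * ∑ i ∈ Icc V N, p i ≤ c_u)) :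
    (∑ i ∈ Icc U N, p i ≥ (1 / 3) * ∑ i ∈ Icc (I + 1) N, p i ∨
      ∑ i ∈ Icc (I + 1) N, p i ≤ ∑ i ∈ Icc U N, p i + Real.sqrt c_I / n) ∧
    (∑ i ∈ Icc U N, p i + 1 / n ≤ ∑ i ∈ Icc (I + 1) N, p i + 1 / n) ∧
    (∑ i ∈ Icc (I + 1) N, p i + 1 / n ≤ 3 * (∑ i ∈ Icc U N, p i + 1 / n)) := by
  set ε := √c_I / n
  set A := ∑ i ∈ Icc (I + 1) N, p i
  set B := ∑ i ∈ Icc U N, p i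
  set M := ∑ i ∈ Ico (I + 1) U, p i
  have hε2 : ε ^ 2 = c_I / (n : ℝ) ^ 2 := by rw [div_pow, sq_sqrt hcI.le]
  have hsplit : M + B = A := by
    simp only [M, B, A, ← Ico_add_one_right_eq_Icc]
    exact sum_Ico_consecutive p hUI (by omega)
  have hmiddle : M ≤ ε ∨ M ≤ 2 * B := by
    obtain ⟨V, rfl⟩ : ∃ V, U = V + 1 := ⟨U - 1, by omega⟩
    rcases (Nat.lt_succ_iff.mp hUI).eq_or_lt with rfl | hIV
    · left
      simp only [M, Ico_self, sum_empty]
      positivity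
    refine sum_le_or_sum_le_two_mul (j := V) (by simp; omega)
      (fun i hi => hmono i V (by simp at hi; omega) (by simp at hi; omega) (by omega))
      (hnn V) (by positivity) ?_ ?_
    · rw [hε2]
      refine le_trans (sum_le_sum_of_subset_of_nonneg ?_ fun i _ _ => sq_nonneg (p i)) hI1
      rw [← Ico_add_one_right_eq_Icc]
      exact Ico_subset_Ico_right (by omega)
    · have hcut := hU2 V hIV (lt_add_one V)
      rw [not_le, ← add_sum_Ioc_eq_sum_Icc (by omega), ← Icc_add_one_left_eq_Ioc] at hcut
      rw [hε2]
      rcases (sq_nonneg (n : ℝ)).eq_or_lt with hn | hn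
      · rw [← hn] at hcut ⊢
        linarith
      · rw [div_lt_iff₀ hn]
        linarith
  have hB : 0 ≤ B := sum_nonneg fun i _ => hnn i
  have hM : 0 ≤ M := sum_nonneg fun i _ => hnn i
  have hε_le : ε ≤ 1 / n :=
    div_le_div_of_nonneg_right (sqrt_le_one.mpr (by linarith)) (Nat.cast_nonneg n)
  have h1n : 0 ≤ 1 / (n : ℝ) := by positivity
  have hfirst : B ≥ 1 / 3 * A ∨ A ≤ B + ε :=
    hmiddle.symm.imp (fun _ => by linarith) (fun _ => by linarith)
  refine ⟨hfirst, by linarith, ?_⟩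
  rcases hfirst with h | h <;> linarith

/-- Comparison of the tail cutoffs `I` and `U` (entries `p 1 ≥ ... ≥ p N ≥ 0`). -/
theorem I_and_U (N n I U : ℕ) (p : ℕ → ℝ) (c_I c_u : ℝ)
    (hmono : ∀ i j, 1 ≤ i → i ≤ j → j ≤ N → p j ≤ p i)
    (hnn : ∀ i, 0 ≤ p i) (hn : 2 ≤ n)
    (hcI : 0 < c_I) (hcIu : c_I ≤ c_u) (hcu : c_u < 1)
    (hI1 : ∑ i ∈ Icc (I + 1) N, (p i) ^ 2 ≤ c_I / (n : ℝ) ^ 2)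
    (hI2 : ∀ J, J < I → ¬ (∑ i ∈ Icc (J + 1) N, (p i) ^ 2 ≤ c_I / (n : ℝ) ^ 2))
    (hUI : I < U) (hUN : U ≤ N)
    (hU1 : (n : ℝ) ^ 2 * p U * ∑ i ∈ Icc U N, p i ≤ c_u)
    (hU2 : ∀ V, I < V → V < U → ¬ ((n : ℝ) ^ 2 * p V * ∑ i ∈ Icc V N, p i ≤ c_u)) :
    (∑ i ∈ Icc U N, p i ≥ (1 / 3) * ∑ i ∈ Icc (I + 1) N, p i ∨
      ∑ i ∈ Icc (I + 1) N, p i ≤ ∑ i ∈ Icc U N, p i + Real.sqrt c_I / n) ∧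
    (∑ i ∈ Icc U N, p i + 1 / n ≤ ∑ i ∈ Icc (I + 1) N, p i + 1 / n) ∧
    (∑ i ∈ Icc (I + 1) N, p i + 1 / n ≤ 3 * (∑ i ∈ Icc U N, p i + 1 / n)) :=
  I_and_U_general N n I U p c_I c_u hmono hnn hcI hcIu hcu hI1 hUI hUN hU2
end

section
/- Let t ∈ [1,2], r = 2t/(4-t), and let p'_1 ≥ ... ≥ p'_N ≥ 0 be reals. Suppose indices A < I ≤ N satisfy (Σ_{i≥I} p'_i²)^{2-r} ≥ c for an absolute constant c ≥ 1 (tail second moment large at I) and (p'_{A+1})^{2-r}·Σ_{i≤I} (p'_i)^r ≤ 1 (definition of A). Then (Σ_{i≥I} p'_i)^{2-r} ≥ Σ_{i≤I} (p'_i)^r, and consequently (Σ_{i≥I} p'_i)^{(2-t)/t} ≥ (Σ_{i≤I} (p'_i)^r)^{1/(2r)} after raising to the power 1/(2r) with 2-r = 2(2-t)·r/t. -/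
open Real Finset

/-! With `p = p' (A + 1)`, every tail term `p' i` (`i ≥ I > A`) is at most `p`, so
`∑_{i ≥ I} p' i ^ 2 ≤ p * S` where `S = ∑_{i ≥ I} p' i`. Hence `(p * S) ^ (2 - r) ≥ c ≥ 1`,
while the definition of `A` says `p ^ (2 - r) * B ≤ 1` for the bulk sum `B`; dividing by
`p ^ (2 - r)` gives `B ≤ S ^ (2 - r)`. -/

theorem Finset.sum_sq_le_mul_sum {ι R : Type*} [CommSemiring R] [PartialOrder R]
    [IsOrderedRing R] {s : Finset ι} {f : ι → R} {M : R} (h0 : ∀ i ∈ s, 0 ≤ f i)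
    (hM : ∀ i ∈ s, f i ≤ M) : ∑ i ∈ s, f i ^ 2 ≤ M * ∑ i ∈ s, f i := by
  rw [mul_sum]
  exact sum_le_sum fun i hi => by
    rw [sq]
    exact mul_le_mul_of_nonneg_right (hM i hi) (h0 i hi)

theorem Real.le_rpow_of_rpow_mul_le_one {p S B e : ℝ} (hp : 0 ≤ p) (hS : 0 ≤ S)
    (hB : p ^ e * B ≤ 1) (hpS : 1 ≤ (p * S) ^ e) : B ≤ S ^ e := by
  rw [mul_rpow hp hS] at hpS
  have hpe : 0 < p ^ e := (rpow_nonneg hp e).lt_of_ne fun h => by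
    rw [← h, zero_mul] at hpS
    exact one_pos.not_ge hpS
  exact le_of_mul_le_mul_left (hB.trans hpS) hpe

section Exponent

variable {t r : ℝ}

theorem pos_of_eq_two_mul_div (ht : 0 < t) (ht4 : t < 4) (hr : r = 2 * t / (4 - t)) :
    0 < r := by
  rw [hr]
  exact div_pos (by linarith) (by linarith)

theorem le_two_of_eq_two_mul_div (ht2 : t ≤ 2) (hr : r = 2 * t / (4 - t)) : r ≤ 2 := by
  rw [hr, div_le_iff₀ (by linarith)]
  linarith

theorem two_sub_mul_inv_two_mul_of_eq_two_mul_div (ht : 0 < t) (ht4 : t < 4)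
    (hr : r = 2 * t / (4 - t)) : (2 - r) * (1 / (2 * r)) = (2 - t) / t := by
  have h4t : 4 - t ≠ 0 := by linarith
  subst hr
  field_simp
  ring

end Exponent

theorem A_and_I_general (N A I : ℕ) (t r : ℝ) (ht1 : 1 ≤ t) (ht2 : t ≤ 2)
    (hr : r = 2 * t / (4 - t)) (p' : ℕ → ℝ) (c : ℝ) (hc : 1 ≤ c)
    (hmono : ∀ i j, 1 ≤ i → i ≤ j → j ≤ N → p' j ≤ p' i)
    (hnn : ∀ i, 0 ≤ p' i) (hAI : A < I)
    (htail : (∑ i ∈ Icc I N, (p' i) ^ 2) ^ (2 - r) ≥ c)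
    (hAdef : (p' (A + 1)) ^ (2 - r) * ∑ i ∈ Icc 1 I, (p' i) ^ r ≤ 1) :
    (∑ i ∈ Icc I N, p' i) ^ (2 - r) ≥ ∑ i ∈ Icc 1 I, (p' i) ^ r ∧
    (∑ i ∈ Icc I N, p' i) ^ ((2 - t) / t) ≥ (∑ i ∈ Icc 1 I, (p' i) ^ r) ^ (1 / (2 * r)) := by
  have ht0 : 0 < t := by linarith
  have ht4 : t < 4 := by linarith
  have hr0 := pos_of_eq_two_mul_div ht0 ht4 hr
  have h2r : 0 ≤ 2 - r := sub_nonneg.2 (le_two_of_eq_two_mul_div ht2 hr)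
  have hS : 0 ≤ ∑ i ∈ Icc I N, p' i := sum_nonneg fun i _ => hnn i
  have hsq : ∑ i ∈ Icc I N, p' i ^ 2 ≤ p' (A + 1) * ∑ i ∈ Icc I N, p' i :=
    sum_sq_le_mul_sum (fun i _ => hnn i) fun i hi =>
      hmono _ _ le_add_self (hAI.trans_le (mem_Icc.1 hi).1) (mem_Icc.1 hi).2
  have hbulk : ∑ i ∈ Icc 1 I, p' i ^ r ≤ (∑ i ∈ Icc I N, p' i) ^ (2 - r) :=
    le_rpow_of_rpow_mul_le_one (hnn _) hS hAdef <| hc.trans <| htail.trans <|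
      rpow_le_rpow (sum_nonneg fun i _ => sq_nonneg _) hsq h2r
  refine ⟨hbulk, ?_⟩
  calc (∑ i ∈ Icc 1 I, p' i ^ r) ^ (1 / (2 * r))
      ≤ ((∑ i ∈ Icc I N, p' i) ^ (2 - r)) ^ (1 / (2 * r)) :=
        rpow_le_rpow (sum_nonneg fun i _ => rpow_nonneg (hnn i) r) hbulk (by positivity)
    _ = (∑ i ∈ Icc I N, p' i) ^ ((2 - t) / t) := by
        rw [← rpow_mul hS, two_sub_mul_inv_two_mul_of_eq_two_mul_div ht0 ht4 hr]

/-- Index comparison lemma (rescaled case `p' i = n * p i`): when `A < I`,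
the tail term dominates the bulk term. Here `r = 2t/(4-t)`. -/
theorem A_and_I (N A I : ℕ) (t r : ℝ) (ht1 : 1 ≤ t) (ht2 : t ≤ 2)
    (hr : r = 2 * t / (4 - t)) (p' : ℕ → ℝ) (c : ℝ) (hc : 1 ≤ c)
    (hmono : ∀ i j, 1 ≤ i → i ≤ j → j ≤ N → p' j ≤ p' i)
    (hnn : ∀ i, 0 ≤ p' i) (hAI : A < I) (hIN : I ≤ N)
    (htail : (∑ i ∈ Icc I N, (p' i) ^ 2) ^ (2 - r) ≥ c)
    (hAdef : (p' (A + 1)) ^ (2 - r) * ∑ i ∈ Icc 1 I, (p' i) ^ r ≤ 1) :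
    (∑ i ∈ Icc I N, p' i) ^ (2 - r) ≥ ∑ i ∈ Icc 1 I, (p' i) ^ r ∧
    (∑ i ∈ Icc I N, p' i) ^ ((2 - t) / t) ≥ (∑ i ∈ Icc 1 I, (p' i) ^ r) ^ (1 / (2 * r)) :=
  A_and_I_general N A I t r ht1 ht2 hr p' c hc hmono hnn hAI htail hAdef
end

section
/- Let p_1 ≥ ... ≥ p_N ≥ 0, n ≥ 1, t ∈ [1,2], r = 2t/(4-t), b = (4-2t)/(4-t), constants c_A, c_I > 0. Let I = min{J : Σ_{i>J} p_i² ≤ c_I/n²} and A = max{a ≤ I : p_a^{b/2} ≥ c_A/(√n·(Σ_{i≤I} p_i^r)^{1/4})} (with A possibly undefined, in which case take Σ_{i≤A} = 0). If A < I, then Σ_{i>A} p_i² ≤ (c_A⁴ + c_I)/n². -/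
/-!
For `A < i ≤ I` the maximality of `A` says `p_i^{b/2} < τ := c_A / (√n · S^{1/4})` with
`S = ∑_{i ≤ I} p_i^r`; in particular `τ > 0`, so `S ≠ 0`. Since `2b + r = 2`,
`p_i² = p_i^{2b} p_i^r ≤ τ⁴ p_i^r`, and summing over `A < i ≤ I` gives at most `τ⁴ S = c_A⁴ / n²`.
The part of the tail beyond `I` contributes at most `c_I / n²` by the choice of `I`.
-/

open Real Finset

lemma rpow_natCast_mul_le_pow {x y τ : ℝ} (hx : 0 ≤ x) (h : x ^ y ≤ τ) (k : ℕ) :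
    x ^ (k * y) ≤ τ ^ k := by
  rw [mul_comm, rpow_mul_natCast hx]
  exact pow_le_pow_left₀ (rpow_nonneg hx y) h k

lemma div_sqrt_mul_rpow_one_div_four_pow_four (c : ℝ) {n S : ℝ} (hn : 0 ≤ n) (hS : 0 ≤ S) :
    (c / (√n * S ^ ((1 : ℝ) / 4))) ^ 4 = c ^ 4 / (n ^ 2 * S) := by
  have hn4 : √n ^ 4 = n ^ 2 := by rw [show 4 = 2 * 2 from rfl, pow_mul, sq_sqrt hn]
  rw [div_pow, mul_pow, hn4, ← rpow_natCast (S ^ _), ← rpow_mul hS]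
  norm_num

lemma sum_sq_le_mul_sum_rpow_of_add_eq_two {ι : Type*} (s : Finset ι) {x : ι → ℝ}
    (hx : ∀ i ∈ s, 0 ≤ x i) {a c K : ℝ} (hac : a + c = 2) (hK : ∀ i ∈ s, x i ^ a ≤ K) :
    ∑ i ∈ s, x i ^ 2 ≤ K * ∑ i ∈ s, x i ^ c := by
  rw [mul_sum]
  refine sum_le_sum fun i hi => ?_
  rw [← rpow_two, ← hac, rpow_add' (hx i hi) (by rw [hac]; norm_num)]
  exact mul_le_mul_of_nonneg_right (hK i hi) (rpow_nonneg (hx i hi) c)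

lemma sum_Icc_succ_le_add_sum_Icc_succ {f : ℕ → ℝ} (hf : ∀ i, 0 ≤ f i) (A I N : ℕ) :
    ∑ i ∈ Icc (A + 1) N, f i ≤ ∑ i ∈ Icc (A + 1) I, f i + ∑ i ∈ Icc (I + 1) N, f i := by
  rw [← sum_union (disjoint_left.mpr fun i hi hi' => by simp only [mem_Icc] at hi hi'; omega)]
  exact sum_le_sum_of_subset_of_nonneg (fun i hi => by simp only [mem_union, mem_Icc] at hi ⊢; omega)
    fun i _ _ => hf i

theorem A_and_one_over_n_general (N n A I : ℕ) (t r b c_A c_I : ℝ)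
    (ht2 : t ≤ 2)
    (hr : r = 2 * t / (4 - t)) (hb : b = (4 - 2 * t) / (4 - t))
    (p : ℕ → ℝ)
    (hnn : ∀ i, 0 ≤ p i)
    (hI1 : ∑ i ∈ Icc (I + 1) N, (p i) ^ 2 ≤ c_I / (n : ℝ) ^ 2)
    (hAmax : ∀ a, A < a → a ≤ I →
      ¬ ((p a) ^ (b / 2) ≥ c_A / (Real.sqrt n * (∑ i ∈ Icc 1 I, (p i) ^ r) ^ ((1 : ℝ) / 4))))
    (hAltI : A < I) :
    ∑ i ∈ Icc (A + 1) N, (p i) ^ 2 ≤ (c_A ^ 4 + c_I) / (n : ℝ) ^ 2 := by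
  set S := ∑ i ∈ Icc 1 I, p i ^ r
  set τ := c_A / (√n * S ^ ((1 : ℝ) / 4))
  have hτ : ∀ i ∈ Icc (A + 1) I, p i ^ (b / 2) < τ := fun i hi =>
    not_le.mp (hAmax i (mem_Icc.mp hi).1 (mem_Icc.mp hi).2)
  have hS : S ≠ 0 := by
    intro hS0
    have hτ0 : τ = 0 := by simp [τ, hS0]
    exact (rpow_nonneg (hnn (A + 1)) _).not_gt (hτ0 ▸ hτ (A + 1) (mem_Icc.mpr ⟨le_rfl, hAltI⟩))
  have hbr : 2 * b + r = 2 := by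
    rw [hr, hb]
    field_simp [show 4 - t ≠ 0 by linarith]
    ring
  have hbulk : ∑ i ∈ Icc (A + 1) I, p i ^ 2 ≤ τ ^ 4 * ∑ i ∈ Icc (A + 1) I, p i ^ r :=
    sum_sq_le_mul_sum_rpow_of_add_eq_two _ (fun i _ => hnn i) hbr fun i hi => by
      convert rpow_natCast_mul_le_pow (hnn i) (hτ i hi).le 4 using 2
      push_cast
      ring
  have hS_ge : ∑ i ∈ Icc (A + 1) I, p i ^ r ≤ S :=
    sum_le_sum_of_subset_of_nonneg (Icc_subset_Icc (by omega) le_rfl)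
      fun i _ _ => rpow_nonneg (hnn i) r
  have hτS : τ ^ 4 * S = c_A ^ 4 / (n : ℝ) ^ 2 := by
    rw [div_sqrt_mul_rpow_one_div_four_pow_four c_A n.cast_nonneg
      (sum_nonneg fun i _ => rpow_nonneg (hnn i) r), div_mul_eq_mul_div, mul_comm ((n : ℝ) ^ 2), ← div_div, mul_div_cancel_right₀ _ hS]
  calc ∑ i ∈ Icc (A + 1) N, p i ^ 2
      ≤ ∑ i ∈ Icc (A + 1) I, p i ^ 2 + ∑ i ∈ Icc (I + 1) N, p i ^ 2 :=
        sum_Icc_succ_le_add_sum_Icc_succ (fun i => sq_nonneg (p i)) A I N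
    _ ≤ τ ^ 4 * S + c_I / (n : ℝ) ^ 2 :=
        add_le_add (hbulk.trans (mul_le_mul_of_nonneg_left hS_ge (by positivity))) hI1
    _ = (c_A ^ 4 + c_I) / (n : ℝ) ^ 2 := by rw [hτS, add_div]

/-- Lemma `A_and_1_over_n`: the tail beyond the bulk cutoff `A` has small second
moment, `∑_{i>A} p_i² ≤ (c_A⁴ + c_I)/n²`. -/
theorem A_and_one_over_n (N n A I : ℕ) (t r b c_A c_I : ℝ)
    (ht1 : 1 ≤ t) (ht2 : t ≤ 2)
    (hr : r = 2 * t / (4 - t)) (hb : b = (4 - 2 * t) / (4 - t))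
    (p : ℕ → ℝ)
    (hmono : ∀ i j, 1 ≤ i → i ≤ j → j ≤ N → p j ≤ p i)
    (hnn : ∀ i, 0 ≤ p i) (hn : 1 ≤ n) (hcA : 0 < c_A) (hcI : 0 < c_I)
    (hI1 : ∑ i ∈ Icc (I + 1) N, (p i) ^ 2 ≤ c_I / (n : ℝ) ^ 2)
    (hI2 : ∀ J, J < I → ¬ (∑ i ∈ Icc (J + 1) N, (p i) ^ 2 ≤ c_I / (n : ℝ) ^ 2))
    (hAI : A ≤ I) (hIN : I ≤ N)
    (hAmem : 1 ≤ A →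
      (p A) ^ (b / 2) ≥ c_A / (Real.sqrt n * (∑ i ∈ Icc 1 I, (p i) ^ r) ^ ((1 : ℝ) / 4)))
    (hAmax : ∀ a, A < a → a ≤ I →
      ¬ ((p a) ^ (b / 2) ≥ c_A / (Real.sqrt n * (∑ i ∈ Icc 1 I, (p i) ^ r) ^ ((1 : ℝ) / 4))))
    (hAltI : A < I) :
    ∑ i ∈ Icc (A + 1) N, (p i) ^ 2 ≤ (c_A ^ 4 + c_I) / (n : ℝ) ^ 2 :=
  A_and_one_over_n_general N n A I t r b c_A c_I ht2 hr hb p hnn hI1 hAmax hAltI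
end

section
/- Let q_1,...,q_m ∈ [0,1] and n ≥ 2. The probability that n iid samples from ⊗_j Bernoulli(q_j) have every coordinate total count N_j ∈ {0,1} equals Π_j (1-q_j)^{n-1}(1 + (n-1)q_j), and this is at most exp(-min{ (1/3)·Σ_j (n-1)²q_j², (1/10)·(Σ_j (n-1)²q_j²)^{1/2} }). -/
/-!
The event that no coordinate is observed twice is the disjoint union, over the choice in each
coordinate `j` of at most one sample `i` with `X i j = 1`, of events whose probabilities factor
by independence; summing over the choices coordinate by coordinate gives the product formula.

For the bound, with `x = (n-1) q`, each factor is at most `exp (-x) (1 + x)`, and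
`1 + x ≤ exp (x - x²/3)` for `x ≤ 1/2`, `1 + x ≤ exp (9x/10)` for `x ≥ 1/2`. Both cases give
`1 + x ≤ exp (x - φ (x²))` for `φ t = min (t/3) (√t/10)` (`acceptanceExponent`). Since `φ` is
concave with `φ 0 = 0`, it is subadditive, so the exponents add up to at least `φ (∑ x_j²)`.
-/

open MeasureTheory ProbabilityTheory Finset Real

section Patterns

variable {ι : Type*} [DecidableEq ι]

def unitOrZero (o : Option ι) (i : ι) : ℕ := if o = some i then 1 else 0

theorem unitOrZero_injective : Function.Injective (unitOrZero (ι := ι)) := by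
  intro o o' h
  cases o with
  | none => cases o' with
    | none => rfl
    | some i' => simpa [unitOrZero] using congrFun h i'
  | some i => simpa [unitOrZero, eq_comm] using congrFun h i

theorem sum_le_one_iff_mem_range_unitOrZero [Fintype ι] (x : ι → ℕ) :
    ∑ i, x i ≤ 1 ↔ x ∈ Set.range unitOrZero := by
  constructor
  · intro hx
    by_cases h0 : ∀ i, x i = 0
    · exact ⟨none, funext fun i => by simp [unitOrZero, h0]⟩
    push Not at h0
    obtain ⟨i, hi⟩ := h0
    have hrest : ∑ k ∈ univ.erase i, x k = 0 := by
      have := add_sum_erase univ x (mem_univ i)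
      omega
    rw [sum_eq_zero_iff] at hrest
    refine ⟨some i, funext fun k => ?_⟩
    by_cases hk : k = i
    · subst hk
      have := single_le_sum (fun k _ => Nat.zero_le (x k)) (mem_univ k)
      simp only [unitOrZero, if_true]
      omega
    · simp [unitOrZero, Ne.symm hk, hrest k (mem_erase.2 ⟨hk, mem_univ k⟩)]
  · rintro ⟨o, rfl⟩
    cases o <;> simp [unitOrZero]

theorem sum_option_prod_ite {R : Type*} [CommSemiring R] [Fintype ι] (a b : R) :
    ∑ o : Option ι, ∏ i, (if o = some i then a else b)
      = b ^ Fintype.card ι + Fintype.card ι * (a * b ^ (Fintype.card ι - 1)) := by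
  simp [Fintype.sum_option, prod_ite, filter_eq, filter_ne, card_erase_of_mem]

end Patterns

theorem ProbabilityTheory.iIndepFun.measure_forall_eq {Ω ι β : Type*} [MeasurableSpace Ω]
    {μ : Measure Ω} [Fintype ι] [MeasurableSpace β] [MeasurableSingletonClass β]
    {Y : ι → Ω → β} (h : iIndepFun Y μ) (v : ι → β) :
    μ {ω | ∀ i, Y i ω = v i} = ∏ i, μ {ω | Y i ω = v i} := by
  simpa [Set.preimage, Set.ofPred_forall] using
    h.measure_inter_preimage_eq_mul univ (sets := fun i => {v i})
      fun i _ => measurableSet_singleton _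

theorem measure_forall_sum_le_one_eq {Ω ι κ : Type*} [MeasurableSpace Ω] (μ : Measure Ω)
    [Fintype ι] [Fintype κ] (q : κ → ℝ) (hq0 : ∀ j, 0 ≤ q j) (hq1 : ∀ j, q j ≤ 1)
    (X : ι → κ → Ω → ℕ) (hmeas : ∀ i j, Measurable (X i j))
    (hindep : iIndepFun (fun p : ι × κ => X p.1 p.2) μ)
    (hone : ∀ i j, μ {ω | X i j ω = 1} = ENNReal.ofReal (q j))
    (hzero : ∀ i j, μ {ω | X i j ω = 0} = ENNReal.ofReal (1 - q j)) :
    μ {ω | ∀ j, ∑ i, X i j ω ≤ 1} = ENNReal.ofReal (∏ j, ((1 - q j) ^ Fintype.card ι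
      + Fintype.card ι * (q j * (1 - q j) ^ (Fintype.card ι - 1)))) := by
  classical
  set pattern : (κ → Option ι) → Set Ω :=
    fun σ => {ω | ∀ p : ι × κ, X p.1 p.2 ω = unitOrZero (σ p.2) p.1}
  have hpoint (i : ι) (j : κ) (o : Option ι) : μ {ω | X i j ω = unitOrZero o i}
      = ENNReal.ofReal (if o = some i then q j else 1 - q j) := by
    unfold unitOrZero
    split_ifs
    exacts [hone i j, hzero i j]
  have hnonneg (i : ι) (j : κ) (o : Option ι) : 0 ≤ if o = some i then q j else 1 - q j := by
    split_ifs <;> linarith [hq0 j, hq1 j]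
  have hevent : {ω | ∀ j, ∑ i, X i j ω ≤ 1} = ⋃ σ, pattern σ := by
    ext ω
    simp only [Set.mem_ofPred_eq, Set.mem_iUnion, sum_le_one_iff_mem_range_unitOrZero,
      Set.mem_range, Classical.skolem, pattern, Prod.forall, funext_iff, eq_comm]
    exact exists_congr fun _ => forall_comm
  have hdisj : Pairwise (Function.onFun Disjoint pattern) := fun σ τ hστ =>
    Set.disjoint_left.2 fun ω hσ hτ => hστ <| funext fun j =>
      unitOrZero_injective <| funext fun i => (hσ (i, j)).symm.trans (hτ (i, j))
  have hmeasσ (σ : κ → Option ι) : MeasurableSet (pattern σ) := by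
    simp only [pattern, Set.ofPred_forall]
    exact MeasurableSet.iInter fun p => hmeas p.1 p.2 (measurableSet_singleton _)
  rw [hevent, measure_iUnion hdisj hmeasσ, tsum_fintype]
  simp only [pattern, hindep.measure_forall_eq, hpoint]
  have hreal : ∑ σ : κ → Option ι, ∏ p : ι × κ, (if σ p.2 = some p.1 then q p.2 else 1 - q p.2)
      = ∏ j, ((1 - q j) ^ Fintype.card ι
        + Fintype.card ι * (q j * (1 - q j) ^ (Fintype.card ι - 1))) := by
    rw [← prod_congr rfl fun j _ => sum_option_prod_ite (q j) (1 - q j), Fintype.prod_sum]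
    simp only [Fintype.prod_prod_type_right]
  rw [← hreal, ENNReal.ofReal_sum_of_nonneg fun σ _ => prod_nonneg fun p _ => hnonneg _ _ _]
  simp only [ENNReal.ofReal_prod_of_nonneg fun p _ => hnonneg _ _ _]

theorem ConcaveOn.map_add_le {f : ℝ → ℝ} (hf : ConcaveOn ℝ (Set.Ici 0) f) (h0 : 0 ≤ f 0)
    {a b : ℝ} (ha : 0 ≤ a) (hb : 0 ≤ b) : f (a + b) ≤ f a + f b := by
  rcases (add_nonneg ha hb).eq_or_lt with hab | hab
  · obtain ⟨rfl, rfl⟩ : a = 0 ∧ b = 0 := ⟨by linarith, by linarith⟩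
    simpa using h0
  -- `c` is a convex combination of `a + b` and `0`.
  have key : ∀ c, 0 ≤ c → c ≤ a + b → c / (a + b) * f (a + b) ≤ f c := fun c hc hcab => by
    have ht : c / (a + b) ≤ 1 := (div_le_one hab).2 hcab
    have := hf.2 (Set.mem_Ici.2 hab.le) (Set.mem_Ici.2 le_rfl) (div_nonneg hc hab.le)
      (sub_nonneg.2 ht) (add_sub_cancel _ _)
    simp only [smul_eq_mul, mul_zero, add_zero, div_mul_cancel₀ _ hab.ne'] at this
    nlinarith [mul_nonneg (sub_nonneg.2 ht) h0]
  have hsum : a / (a + b) * f (a + b) + b / (a + b) * f (a + b) = f (a + b) := by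
    field_simp
  linarith [key a ha (by linarith), key b hb (by linarith)]

noncomputable def acceptanceExponent (t : ℝ) : ℝ :=
  min ((1 / 3) * t) ((1 / 10) * t ^ ((1 : ℝ) / 2))

theorem concaveOn_acceptanceExponent : ConcaveOn ℝ (Set.Ici 0) acceptanceExponent :=
  ((concaveOn_id (convex_Ici 0)).smul (by norm_num : (0 : ℝ) ≤ 1 / 3)).inf
    ((Real.concaveOn_rpow (by norm_num) (by norm_num)).smul (by norm_num : (0 : ℝ) ≤ 1 / 10))

theorem acceptanceExponent_sum_le {κ : Type*} (s : Finset κ) (t : κ → ℝ) (ht : ∀ j ∈ s, 0 ≤ t j) :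
    acceptanceExponent (∑ j ∈ s, t j) ≤ ∑ j ∈ s, acceptanceExponent (t j) :=
  Finset.le_sum_of_subadditive_on_pred _ (0 ≤ ·) (by simp [acceptanceExponent])
    (fun _ _ => concaveOn_acceptanceExponent.map_add_le (by simp [acceptanceExponent]))
    (fun _ _ => add_nonneg) t ht

theorem acceptanceExponent_sq_le {x : ℝ} (hx : 0 ≤ x) :
    acceptanceExponent (x ^ 2) ≤ x ^ 2 / 3 ∧ acceptanceExponent (x ^ 2) ≤ x / 10 := by
  rw [acceptanceExponent, ← Real.sqrt_eq_rpow, Real.sqrt_sq hx]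
  constructor <;> linarith [min_le_left ((1 / 3) * x ^ 2) ((1 / 10) * x),
    min_le_right ((1 / 3) * x ^ 2) ((1 / 10) * x)]

theorem one_add_le_exp_sub_sq_div_three {x : ℝ} (hx0 : 0 ≤ x) (hx : x ≤ 1 / 2) :
    1 + x ≤ exp (x - x ^ 2 / 3) := by
  have h := Real.quadratic_le_exp_of_nonneg (x := x - x ^ 2 / 3) (by nlinarith)
  nlinarith [mul_nonneg (sq_nonneg x) (show (0 : ℝ) ≤ 3 - 6 * x by linarith), sq_nonneg (x ^ 2)]

theorem one_add_le_exp_nine_mul_div_ten {x : ℝ} (hx : 1 / 2 ≤ x) :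
    1 + x ≤ exp (9 * x / 10) := by
  nlinarith [Real.quadratic_le_exp_of_nonneg (x := 9 * x / 10) (by linarith)]

theorem one_add_le_exp_sub_acceptanceExponent_sq {x : ℝ} (hx : 0 ≤ x) :
    1 + x ≤ exp (x - acceptanceExponent (x ^ 2)) := by
  obtain ⟨hsq, hlin⟩ := acceptanceExponent_sq_le hx
  rcases le_total x (1 / 2) with hx' | hx'
  · exact (one_add_le_exp_sub_sq_div_three hx hx').trans (exp_le_exp.2 (by linarith))
  · exact (one_add_le_exp_nine_mul_div_ten hx').trans (exp_le_exp.2 (by linarith))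

theorem one_sub_pow_mul_one_add_le_exp {q : ℝ} (hq0 : 0 ≤ q) (hq1 : q ≤ 1) (k : ℕ) :
    (1 - q) ^ k * (1 + k * q) ≤ exp (-acceptanceExponent ((k * q) ^ 2)) := by
  have hkq : 0 ≤ k * q := by positivity
  calc (1 - q) ^ k * (1 + k * q)
      ≤ exp (-q) ^ k * exp (k * q - acceptanceExponent ((k * q) ^ 2)) := by
        refine mul_le_mul (pow_le_pow_left₀ (by linarith) ?_ k)
          (one_add_le_exp_sub_acceptanceExponent_sq hkq) (by linarith) (by positivity)
        linarith [add_one_le_exp (-q)]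
    _ = exp (-acceptanceExponent ((k * q) ^ 2)) := by
        rw [← exp_nat_mul, ← exp_add]; ring_nf

theorem prod_one_sub_pow_mul_one_add_le_exp {κ : Type*} (s : Finset κ) (q : κ → ℝ)
    (hq0 : ∀ j, 0 ≤ q j) (hq1 : ∀ j, q j ≤ 1) (k : ℕ) :
    ∏ j ∈ s, (1 - q j) ^ k * (1 + k * q j) ≤
      exp (-acceptanceExponent (∑ j ∈ s, (k : ℝ) ^ 2 * q j ^ 2)) := by
  calc ∏ j ∈ s, (1 - q j) ^ k * (1 + k * q j)
      ≤ ∏ j ∈ s, exp (-acceptanceExponent ((k * q j) ^ 2)) :=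
        prod_le_prod (fun j _ => mul_nonneg (pow_nonneg (sub_nonneg.2 (hq1 j)) _)
          (by have := hq0 j; positivity))
          (fun j _ => one_sub_pow_mul_one_add_le_exp (hq0 j) (hq1 j) k)
    _ ≤ exp (-acceptanceExponent (∑ j ∈ s, (k : ℝ) ^ 2 * q j ^ 2)) := by
        rw [← exp_sum, sum_neg_distrib, exp_le_exp, neg_le_neg_iff]
        simp_rw [← mul_pow]
        exact acceptanceExponent_sum_le s _ fun j _ => sq_nonneg _

theorem collision_test_acceptance_general
    {Ω : Type*} [MeasurableSpace Ω] (μ : Measure Ω)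
    (n m : ℕ) (hn : 2 ≤ n) (q : Fin m → ℝ)
    (hq0 : ∀ j, 0 ≤ q j) (hq1 : ∀ j, q j ≤ 1)
    (X : Fin n → Fin m → Ω → ℕ)
    (hmeas : ∀ i j, Measurable (X i j))
    (hindep : iIndepFun (m := fun _ : Fin n × Fin m => (inferInstance : MeasurableSpace ℕ))
      (fun ij => X ij.1 ij.2) μ)
    (hone : ∀ i j, μ {ω | X i j ω = 1} = ENNReal.ofReal (q j))
    (hzero : ∀ i j, μ {ω | X i j ω = 0} = ENNReal.ofReal (1 - q j)) :
    μ {ω | ∀ j, (∑ i, X i j ω) ≤ 1}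
      = ENNReal.ofReal (∏ j, (1 - q j) ^ (n - 1) * (1 + ((n : ℝ) - 1) * q j)) ∧
    ∏ j, (1 - q j) ^ (n - 1) * (1 + ((n : ℝ) - 1) * q j) ≤
      Real.exp (-(min ((1 / 3) * ∑ j, ((n : ℝ) - 1) ^ 2 * q j ^ 2)
        ((1 / 10) * (∑ j, ((n : ℝ) - 1) ^ 2 * q j ^ 2) ^ ((1 : ℝ) / 2)))) := by
  obtain ⟨k, rfl⟩ : ∃ k, n = k + 1 := ⟨n - 1, by omega⟩
  simp only [Nat.add_sub_cancel, Nat.cast_add, Nat.cast_one, add_sub_cancel_right]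
  refine ⟨?_, prod_one_sub_pow_mul_one_add_le_exp univ q hq0 hq1 k⟩
  rw [measure_forall_sum_le_one_eq μ q hq0 hq1 X hmeas hindep hone hzero, Fintype.card_fin]
  congr 2 with j
  push_cast
  ring

/-- The probability that every coordinate count `N_j = ∑_i X_i(j)` is at most 1
equals `∏_j (1-q_j)^{n-1}(1+(n-1)q_j)`, and this product is bounded by
`exp(-min{(1/3)∑ (n-1)²q_j², (1/10)(∑ (n-1)²q_j²)^{1/2}})`. -/
theorem collision_test_acceptance
    {Ω : Type*} [MeasurableSpace Ω] (μ : Measure Ω) [IsProbabilityMeasure μ]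
    (n m : ℕ) (hn : 2 ≤ n) (q : Fin m → ℝ)
    (hq0 : ∀ j, 0 ≤ q j) (hq1 : ∀ j, q j ≤ 1)
    (X : Fin n → Fin m → Ω → ℕ)
    (hmeas : ∀ i j, Measurable (X i j))
    (hindep : iIndepFun (m := fun _ : Fin n × Fin m => (inferInstance : MeasurableSpace ℕ))
      (fun ij => X ij.1 ij.2) μ)
    (hone : ∀ i j, μ {ω | X i j ω = 1} = ENNReal.ofReal (q j))
    (hzero : ∀ i j, μ {ω | X i j ω = 0} = ENNReal.ofReal (1 - q j)) :
    μ {ω | ∀ j, (∑ i, X i j ω) ≤ 1}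
      = ENNReal.ofReal (∏ j, (1 - q j) ^ (n - 1) * (1 + ((n : ℝ) - 1) * q j)) ∧
    ∏ j, (1 - q j) ^ (n - 1) * (1 + ((n : ℝ) - 1) * q j) ≤
      Real.exp (-(min ((1 / 3) * ∑ j, ((n : ℝ) - 1) ^ 2 * q j ^ 2)
        ((1 / 10) * (∑ j, ((n : ℝ) - 1) ^ 2 * q j ^ 2) ^ ((1 : ℝ) / 2)))) :=
  collision_test_acceptance_general μ n m hn q hq0 hq1 X hmeas hindep hone hzero
end
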